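/- Let n ≥ 1, let M and G be nonnegative n×n real matrices with M ≠ 0, let D be a nonnegative diagonal n×n real matrix, and for β > 0 set J_β = β M + G − D. Assume that β M + G is irreducible for every β > 0. Suppose β* > 0 satisfies λ_max(J_{β*}) = 0. Then for every β with 0 < β < β*, one has λ_max(J_β) < 0. -/

import Mathlib

/-- `l0` is the dominant (Perron–Frobenius) eigenvalue of the real matrix `J`:
it is a real eigenvalue of `J` and every complex eigenvalue `lam` of `J`
(i.e. root of the characteristic polynomial over `ℂ`) satisfies `lam.re ≤ l0`. -/
def IsLamMax {n : ℕ} (J : Matrix (Fin n) (Fin n) ℝ) (l0 : ℝ) : Prop :=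
  (∃ Z : Fin n → ℝ, Z ≠ 0 ∧ J.mulVec Z = l0 • Z) ∧
  ∀ lam : ℂ, (Polynomial.aeval lam) J.charpoly = 0 → lam.re ≤ l0

/-!
Shift `J_β = β M + G - D` by a scalar `c ≥ max_i D i i`, so that `A_β = J_β + c` is nonnegative
and irreducible. If `λ_max(J_β) = l ≥ 0`, the absolute value of an eigenvector, smoothed by a
positive matrix commuting with `A_β`, is a vector `W > 0` with `A_β W ≥ (l + c) W`. As
`A_{β*} = A_β + (β* - β) M` and `M W ≠ 0`, `A_{β*} W ≥ c W` with strict inequality somewhere; by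
the Collatz–Wielandt bound (from Gelfand's formula) and the Perron–Frobenius argument, `A_{β*}`
then has a real eigenvalue `t > c`, so `J_{β*}` has the eigenvalue `t - c > 0`, contradicting
`λ_max(J_{β*}) = 0`.
-/

open Matrix Filter Topology

lemma exists_pos_smul_le {ι : Type*} [Finite ι] {u : ι → ℝ} (hu : ∀ i, 0 < u i) (v : ι → ℝ) :
    ∃ ε : ℝ, 0 < ε ∧ ε • v ≤ u := by
  have hsmall : ∀ᶠ ε in 𝓝 (0 : ℝ), ∀ i, ε * v i < u i := eventually_all.mpr fun i =>
    (continuous_id.mul continuous_const).continuousAt.eventually_lt continuousAt_const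
      (by simpa using hu i)
  obtain ⟨ε, hεv, hε⟩ :=
    ((eventually_nhdsWithin_of_eventually_nhds hsmall).and self_mem_nhdsWithin).exists
      (f := 𝓝[>] (0 : ℝ))
  exact ⟨ε, hε, fun i => (hεv i).le⟩

lemma ofReal_le_spectralRadius_of_pow_le_norm_pow {𝔸 : Type*} [NormedRing 𝔸] [NormedAlgebra ℂ 𝔸]
    [CompleteSpace 𝔸] {a : 𝔸} {s : ℝ} (h : ∀ k : ℕ, s ^ k ≤ ‖a ^ k‖) :
    ENNReal.ofReal s ≤ spectralRadius ℂ a := by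
  rcases lt_or_ge s 0 with hs | hs
  · simp [ENNReal.ofReal_of_nonpos hs.le]
  refine ge_of_tendsto (spectrum.pow_nnnorm_pow_one_div_tendsto_nhds_spectralRadius a) ?_
  filter_upwards [eventually_ge_atTop 1] with k hk
  rw [one_div, ENNReal.le_rpow_inv_iff (by positivity), ENNReal.rpow_natCast,
    ← ENNReal.ofReal_pow hs, ← enorm_eq_nnnorm, ← ofReal_norm]
  exact ENNReal.ofReal_le_ofReal (h k)

namespace Matrix

section Eigen

variable {ι R K : Type*} [Fintype ι] [DecidableEq ι]

lemma add_smul_one_mulVec_eq_smul_iff [CommRing R] {J : Matrix ι ι R} {c t : R} {v : ι → R} :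
    (J + c • 1) *ᵥ v = t • v ↔ J *ᵥ v = (t - c) • v := by
  rw [add_mulVec, smul_mulVec, one_mulVec, sub_smul, eq_sub_iff_add_eq]

lemma exists_mulVec_eq_smul_of_mem_spectrum [Field K] {B : Matrix ι ι K} {z : K}
    (hz : z ∈ spectrum K B) : ∃ v : ι → K, v ≠ 0 ∧ B *ᵥ v = z • v := by
  rw [← spectrum_toLin', ← Module.End.hasEigenvalue_iff_mem_spectrum] at hz
  obtain ⟨v, hv⟩ := hz.exists_hasEigenvector
  exact ⟨v, hv.2, by simpa using hv.apply_eq_smul⟩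

lemma mem_spectrum_of_mulVec_eq_smul [Field K] {B : Matrix ι ι K} {z : K} {v : ι → K}
    (hv0 : v ≠ 0) (hv : B *ᵥ v = z • v) : z ∈ spectrum K B := by
  rw [← spectrum_toLin']
  exact (Module.End.hasEigenvalue_of_hasEigenvector
    (Module.End.hasEigenvector_iff.mpr ⟨by simpa using hv, hv0⟩)).mem_spectrum

end Eigen

variable {ι : Type*} [Fintype ι] {A B : Matrix ι ι ℝ}

lemma mulVec_mono_of_nonneg (hA : ∀ i j, 0 ≤ A i j) {v w : ι → ℝ} (hvw : v ≤ w) :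
    A *ᵥ v ≤ A *ᵥ w := fun i =>
  dotProduct_le_dotProduct_of_nonneg_left hvw (hA i)

lemma mulVec_nonneg_of_nonneg (hA : ∀ i j, 0 ≤ A i j) {v : ι → ℝ} (hv : 0 ≤ v) :
    0 ≤ A *ᵥ v := by
  simpa using mulVec_mono_of_nonneg hA hv

lemma mulVec_pos_of_pos (hA : ∀ i j, 0 < A i j) {v : ι → ℝ} (hv : 0 ≤ v) (hv0 : v ≠ 0)
    (i : ι) : 0 < (A *ᵥ v) i := by
  obtain ⟨j, hj⟩ := Function.ne_iff.mp hv0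
  exact Finset.sum_pos' (fun k _ => mul_nonneg (hA i k).le (hv k))
    ⟨j, Finset.mem_univ j, mul_pos (hA i j) ((hv j).lt_of_ne' hj)⟩

lemma mulVec_ne_zero_of_pos (hA : ∀ i j, 0 ≤ A i j) (hA0 : A ≠ 0) {v : ι → ℝ}
    (hv : ∀ i, 0 < v i) : A *ᵥ v ≠ 0 := by
  obtain ⟨i, j, hij⟩ : ∃ i j, A i j ≠ 0 := by
    by_contra! h
    exact hA0 (Matrix.ext h)
  refine Function.ne_iff.mpr ⟨i, (Finset.sum_pos' (fun k _ => mul_nonneg (hA i k) (hv k).le)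
    ⟨j, Finset.mem_univ j, mul_pos ((hA i j).lt_of_ne' hij) (hv j)⟩).ne'⟩

lemma smul_norm_le_mulVec_norm {𝕜 : Type*} [RCLike 𝕜] (hA : ∀ i j, 0 ≤ A i j) {v : ι → 𝕜}
    {z : 𝕜} (hv : A.map (algebraMap ℝ 𝕜) *ᵥ v = z • v) :
    ‖z‖ • (fun i => ‖v i‖) ≤ A *ᵥ fun i => ‖v i‖ := by
  intro i
  calc ‖z‖ * ‖v i‖ = ‖(A.map (algebraMap ℝ 𝕜) *ᵥ v) i‖ := by simp [hv]
    _ ≤ ∑ j, ‖A.map (algebraMap ℝ 𝕜) i j * v j‖ := norm_sum_le _ _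
    _ = (A *ᵥ fun i => ‖v i‖) i := by
      simp [mulVec, dotProduct, norm_mul, abs_of_nonneg (hA i _)]

lemma smul_lt_add_smul_mulVec (hB : ∀ i j, 0 ≤ B i j) (hB0 : B ≠ 0) {W : ι → ℝ}
    (hW : ∀ i, 0 < W i) {s d : ℝ} (hd : 0 < d) (h : s • W ≤ A *ᵥ W) :
    s • W < (A + d • B) *ᵥ W := by
  rw [add_mulVec, smul_mulVec]
  refine h.trans_lt (lt_add_of_pos_right _ (lt_of_le_of_ne ?_ ?_))
  · exact smul_nonneg hd.le (mulVec_nonneg_of_nonneg hB fun i => (hW i).le)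
  · exact (smul_ne_zero hd.ne' (mulVec_ne_zero_of_pos hB hB0 hW)).symm

variable [DecidableEq ι]

lemma pow_apply_mono (hA : ∀ i j, 0 ≤ A i j) (hAB : ∀ i j, A i j ≤ B i j) (k : ℕ) (i j : ι) :
    (A ^ k) i j ≤ (B ^ k) i j := by
  induction k generalizing j with
  | zero => rfl
  | succ k ih =>
    simp only [pow_succ, mul_apply]
    exact Finset.sum_le_sum fun l _ => mul_le_mul (ih l) (hAB l j) (hA l j)
      ((pow_apply_nonneg hA k i l).trans (ih l))

lemma IsIrreducible.of_le (hA : A.IsIrreducible) (hAB : ∀ i j, A i j ≤ B i j) :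
    B.IsIrreducible := by
  have hB : ∀ i j, 0 ≤ B i j := fun i j => (hA.nonneg i j).trans (hAB i j)
  rw [isIrreducible_iff_exists_pow_pos hB]
  intro i j
  obtain ⟨k, hk, hpos⟩ := (isIrreducible_iff_exists_pow_pos hA.nonneg).mp hA i j
  exact ⟨k, hk, hpos.trans_le (pow_apply_mono hA.nonneg hAB k i j)⟩

lemma IsIrreducible.exists_pos_commute (hA : A.IsIrreducible) :
    ∃ Q : Matrix ι ι ℝ, Commute A Q ∧ ∀ i j, 0 < Q i j := by
  choose k _ hk using (isIrreducible_iff_exists_pow_pos hA.nonneg).mp hA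
  let N := Finset.univ.sup fun p : ι × ι => k p.1 p.2
  refine ⟨∑ m ∈ Finset.range (N + 1), A ^ m,
    Commute.sum_right _ _ _ fun m _ => (Commute.refl A).pow_right m, fun i j => ?_⟩
  have hkN : k i j ∈ Finset.range (N + 1) := Finset.mem_range_succ_iff.mpr
    (Finset.le_sup (f := fun p : ι × ι => k p.1 p.2) (Finset.mem_univ (i, j)))
  rw [sum_apply]
  exact (hk i j).trans_le (Finset.single_le_sum
    (fun m _ => pow_apply_nonneg hA.nonneg m i j) hkN)

lemma IsIrreducible.exists_pos_smul_le_mulVec (hA : A.IsIrreducible) {W : ι → ℝ} (hW : 0 ≤ W)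
    (hW0 : W ≠ 0) {s : ℝ} (h : s • W ≤ A *ᵥ W) :
    ∃ W' : ι → ℝ, (∀ i, 0 < W' i) ∧ s • W' ≤ A *ᵥ W' := by
  obtain ⟨Q, hAQ, hQ⟩ := hA.exists_pos_commute
  refine ⟨Q *ᵥ W, mulVec_pos_of_pos hQ hW hW0, ?_⟩
  rw [mulVec_mulVec, hAQ.eq, ← mulVec_mulVec, ← mulVec_smul]
  exact mulVec_mono_of_nonneg (fun i j => (hQ i j).le) h

lemma IsIrreducible.exists_pos_add_smul_le_mulVec (hA : A.IsIrreducible) {W : ι → ℝ}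
    (hW : 0 ≤ W) {s : ℝ} (h : s • W < A *ᵥ W) :
    ∃ W' : ι → ℝ, (∀ i, 0 < W' i) ∧ ∃ ε : ℝ, 0 < ε ∧ (s + ε) • W' ≤ A *ᵥ W' := by
  have hW0 : W ≠ 0 := by
    rintro rfl
    simp at h
  obtain ⟨Q, hAQ, hQ⟩ := hA.exists_pos_commute
  have hgain : ∀ i, 0 < (Q *ᵥ (A *ᵥ W - s • W)) i :=
    mulVec_pos_of_pos hQ (sub_nonneg.mpr h.le) (sub_ne_zero.mpr h.ne')
  obtain ⟨ε, hε, hεle⟩ := exists_pos_smul_le hgain (Q *ᵥ W)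
  refine ⟨Q *ᵥ W, mulVec_pos_of_pos hQ hW hW0, ε, hε, ?_⟩
  rw [mulVec_sub, mulVec_smul, mulVec_mulVec, ← hAQ.eq, ← mulVec_mulVec] at hεle
  rw [add_smul]
  exact le_sub_iff_add_le'.mp hεle

lemma pow_smul_le_pow_mulVec (hA : ∀ i j, 0 ≤ A i j) {W : ι → ℝ} {s : ℝ} (hs : 0 ≤ s)
    (h : s • W ≤ A *ᵥ W) (k : ℕ) : s ^ k • W ≤ (A ^ k) *ᵥ W := by
  induction k with
  | zero => simp
  | succ k ih =>
    calc s ^ (k + 1) • W = s • (s ^ k • W) := by rw [pow_succ', mul_smul]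
      _ ≤ s • ((A ^ k) *ᵥ W) := smul_le_smul_of_nonneg_left ih hs
      _ = (A ^ k) *ᵥ (s • W) := (mulVec_smul _ _ _).symm
      _ ≤ (A ^ k) *ᵥ (A *ᵥ W) := mulVec_mono_of_nonneg (pow_apply_nonneg hA k) h
      _ = (A ^ (k + 1)) *ᵥ W := by rw [mulVec_mulVec, pow_succ]

section LinftyOpNorm

attribute [local instance] Matrix.linftyOpNormedRing Matrix.linftyOpNormedAlgebra

lemma pow_le_linfty_opNorm_pow (hA : ∀ i j, 0 ≤ A i j) {W : ι → ℝ} (hW : 0 ≤ W) (hW0 : W ≠ 0)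
    {s : ℝ} (hs : 0 ≤ s) (h : s • W ≤ A *ᵥ W) (k : ℕ) : s ^ k ≤ ‖A ^ k‖ := by
  have hle := pow_smul_le_pow_mulVec hA hs h k
  have hnorm : ‖s ^ k • W‖ ≤ ‖(A ^ k) *ᵥ W‖ :=
    (pi_norm_le_iff_of_nonneg (norm_nonneg _)).mpr fun i => by
      rw [Real.norm_of_nonneg (smul_nonneg (pow_nonneg hs k) hW i)]
      exact (hle i).trans ((Real.le_norm_self _).trans (norm_le_pi_norm _ i))
  rw [norm_smul, Real.norm_of_nonneg (pow_nonneg hs k)] at hnorm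
  exact le_of_mul_le_mul_right (hnorm.trans (linfty_opNorm_mulVec _ _)) (norm_pos_iff.mpr hW0)

lemma linfty_opNorm_map_ofReal (B : Matrix ι ι ℝ) : ‖B.map (algebraMap ℝ ℂ)‖ = ‖B‖ := by
  simp [linfty_opNorm_def]

lemma ofReal_le_spectralRadius_of_smul_le_mulVec (hA : ∀ i j, 0 ≤ A i j) {W : ι → ℝ}
    (hW : 0 ≤ W) (hW0 : W ≠ 0) {s : ℝ} (h : s • W ≤ A *ᵥ W) :
    ENNReal.ofReal s ≤ spectralRadius ℂ (A.map (algebraMap ℝ ℂ)) := by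
  have : CompleteSpace (Matrix ι ι ℂ) := FiniteDimensional.complete ℂ _
  rcases lt_or_ge s 0 with hs | hs
  · simp [ENNReal.ofReal_of_nonpos hs.le]
  refine ofReal_le_spectralRadius_of_pow_le_norm_pow fun k => ?_
  rw [← RingHom.mapMatrix_apply, ← map_pow, RingHom.mapMatrix_apply, linfty_opNorm_map_ofReal]
  exact pow_le_linfty_opNorm_pow hA hW hW0 hs h k

lemma IsIrreducible.exists_eigenvalue_ge_of_smul_le_mulVec (hA : A.IsIrreducible) {W : ι → ℝ}
    (hW : 0 ≤ W) (hW0 : W ≠ 0) {s : ℝ} (h : s • W ≤ A *ᵥ W) :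
    ∃ t, s ≤ t ∧ ∃ V : ι → ℝ, V ≠ 0 ∧ A *ᵥ V = t • V := by
  obtain ⟨j, -⟩ := Function.ne_iff.mp hW0
  have : Nonempty ι := ⟨j⟩
  have : CompleteSpace (Matrix ι ι ℂ) := FiniteDimensional.complete ℂ _
  -- `|v|` for an eigenvector `v` of an eigenvalue `z` of maximal modulus is subinvariant for
  -- `‖z‖`; were it not an eigenvector, strict subinvariance would push `ρ(A)` above `‖z‖`.
  obtain ⟨z, hz, hzρ⟩ := spectrum.exists_nnnorm_eq_spectralRadius (A.map (algebraMap ℝ ℂ))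
  have hle_norm : ∀ {r : ℝ} {W' : ι → ℝ}, 0 ≤ W' → W' ≠ 0 → r • W' ≤ A *ᵥ W' → r ≤ ‖z‖ :=
    fun hW' hW'0 h' => by
      have := ofReal_le_spectralRadius_of_smul_le_mulVec hA.nonneg hW' hW'0 h'
      rwa [← hzρ, ← enorm_eq_nnnorm, ← ofReal_norm, ENNReal.ofReal_le_ofReal_iff (norm_nonneg _)]
        at this
  obtain ⟨v, hv0, hv⟩ := exists_mulVec_eq_smul_of_mem_spectrum hz
  have hW₁ : 0 ≤ fun i => ‖v i‖ := fun i => norm_nonneg _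
  have hW₁0 : (fun i => ‖v i‖) ≠ 0 := fun h => hv0 (funext fun i => norm_eq_zero.mp (congrFun h i))
  have hsub := smul_norm_le_mulVec_norm hA.nonneg hv
  refine ⟨‖z‖, hle_norm hW hW0 h, _, hW₁0, ?_⟩
  by_contra hne
  obtain ⟨W', hW', ε, hε, hεW'⟩ :=
    hA.exists_pos_add_smul_le_mulVec hW₁ (lt_of_le_of_ne hsub (Ne.symm hne))
  linarith [hle_norm (fun i => (hW' i).le) (fun h => (hW' j).ne' (congrFun h j)) hεW']

end LinftyOpNorm

lemma IsIrreducible.exists_eigenvalue_gt_of_smul_lt_mulVec (hA : A.IsIrreducible) {W : ι → ℝ}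
    (hW : 0 ≤ W) {s : ℝ} (h : s • W < A *ᵥ W) :
    ∃ t, s < t ∧ ∃ V : ι → ℝ, V ≠ 0 ∧ A *ᵥ V = t • V := by
  obtain ⟨W', hW', ε, hε, hεW'⟩ := hA.exists_pos_add_smul_le_mulVec hW h
  have hW0 : W ≠ 0 := by
    rintro rfl
    simp at h
  obtain ⟨j, -⟩ := Function.ne_iff.mp hW0
  obtain ⟨t, ht, V, hV0, hV⟩ := hA.exists_eigenvalue_ge_of_smul_le_mulVec
    (fun i => (hW' i).le) (fun h => (hW' j).ne' (congrFun h j)) hεW'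
  exact ⟨t, by linarith, V, hV0, hV⟩

lemma IsIrreducible.exists_pos_abs_smul_le_mulVec (hA : A.IsIrreducible) {V : ι → ℝ}
    (hV0 : V ≠ 0) {t : ℝ} (hV : A *ᵥ V = t • V) :
    ∃ W : ι → ℝ, (∀ i, 0 < W i) ∧ |t| • W ≤ A *ᵥ W :=
  hA.exists_pos_smul_le_mulVec (fun i => norm_nonneg (V i))
    (fun h => hV0 (funext fun i => norm_eq_zero.mp (congrFun h i)))
    (smul_norm_le_mulVec_norm hA.nonneg (by rwa [Algebra.algebraMap_self, RingHom.coe_id, map_id]))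

lemma IsIrreducible.sub_add_smul_one (hB : B.IsIrreducible) {D : Matrix ι ι ℝ} (hD : D.IsDiag)
    {c : ℝ} (hc : ∀ i, D i i ≤ c) : (B - D + c • 1).IsIrreducible := by
  refine hB.of_le fun i j => ?_
  by_cases hij : i = j
  · subst hij
    simp only [add_apply, sub_apply, smul_apply, one_apply_eq, smul_eq_mul, mul_one]
    linarith [hc i]
  · simp [hD hij, one_apply_ne hij]

end Matrix

lemma IsLamMax.le_of_mulVec_eq_smul {n : ℕ} {J : Matrix (Fin n) (Fin n) ℝ} {l0 t : ℝ}
    (h : IsLamMax J l0) {V : Fin n → ℝ} (hV0 : V ≠ 0) (hV : J *ᵥ V = t • V) : t ≤ l0 := by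
  have hroot : J.charpoly.IsRoot t :=
    mem_spectrum_iff_isRoot_charpoly.mp (mem_spectrum_of_mulVec_eq_smul hV0 hV)
  simpa using h.2 t (by
    rw [← Complex.coe_algebraMap, Polynomial.aeval_algebraMap_apply_eq_algebraMap_eval,
      hroot.eq_zero, map_zero])

theorem stmt_6_general {n : ℕ}
    (M G D : Matrix (Fin n) (Fin n) ℝ)
    (hMnn : ∀ i j, 0 ≤ M i j) (hGnn : ∀ i j, 0 ≤ G i j) (hMne : M ≠ 0)
    (hDdiag : D.IsDiag)
    (hirr : ∀ β : ℝ, 0 < β → ∀ i j, ∃ k : ℕ, 0 < k ∧ 0 < ((β • M + G) ^ k) i j)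
    (βstar : ℝ) (hβstar : 0 < βstar)
    (hcrit : IsLamMax (βstar • M + G - D) 0) :
    ∀ β : ℝ, 0 < β → β < βstar →
      ∀ l : ℝ, IsLamMax (β • M + G - D) l → l < 0 := by
  intro β hβ hββ l hl
  by_contra! hl0
  obtain ⟨c, hc⟩ := Finite.bddAbove_range fun i => D i i
  have hA : ∀ b : ℝ, 0 < b → (b • M + G - D + c • 1).IsIrreducible := fun b hb =>
    ((isIrreducible_iff_exists_pow_pos fun i j =>
      add_nonneg (mul_nonneg hb.le (hMnn i j)) (hGnn i j)).mpr (hirr b hb)).sub_add_smul_one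
      hDdiag fun i => hc ⟨i, rfl⟩
  obtain ⟨V, hV0, hV⟩ := hl.1
  obtain ⟨W, hW, hlW⟩ := (hA β hβ).exists_pos_abs_smul_le_mulVec hV0
    (add_smul_one_mulVec_eq_smul_iff (t := l + c) |>.mpr (by simpa using hV))
  have hcW : c • W < (βstar • M + G - D + c • 1) *ᵥ W := by
    have hsplit : βstar • M + G - D + c • 1 = β • M + G - D + c • 1 + (βstar - β) • M := by
      rw [sub_smul]
      abel
    rw [hsplit]
    refine smul_lt_add_smul_mulVec hMnn hMne hW (by linarith) (le_trans ?_ hlW)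
    exact smul_le_smul_of_nonneg_right (by linarith [le_abs_self (l + c)]) fun i => (hW i).le
  obtain ⟨t, hct, V', hV'0, hV'⟩ :=
    (hA βstar hβstar).exists_eigenvalue_gt_of_smul_lt_mulVec (fun i => (hW i).le) hcW
  linarith [hcrit.le_of_mulVec_eq_smul hV'0 (add_smul_one_mulVec_eq_smul_iff.mp hV')]

/-- For `J_β = β M + G - D` with `M, G` nonnegative, `M ≠ 0`, `D` nonnegative diagonal
and `β M + G` irreducible for every `β > 0`: if `λ_max(J_{β*}) = 0` for some `β* > 0`,
then `λ_max(J_β) < 0` for every `0 < β < β*`. -/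
theorem stmt_6 {n : ℕ} (hn : 1 ≤ n)
    (M G D : Matrix (Fin n) (Fin n) ℝ)
    (hMnn : ∀ i j, 0 ≤ M i j) (hGnn : ∀ i j, 0 ≤ G i j) (hMne : M ≠ 0)
    (hDdiag : D.IsDiag) (hDnn : ∀ i, 0 ≤ D i i)
    (hirr : ∀ β : ℝ, 0 < β → ∀ i j, ∃ k : ℕ, 0 < k ∧ 0 < ((β • M + G) ^ k) i j)
    (βstar : ℝ) (hβstar : 0 < βstar)
    (hcrit : IsLamMax (βstar • M + G - D) 0) :
    ∀ β : ℝ, 0 < β → β < βstar →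
      ∀ l : ℝ, IsLamMax (β • M + G - D) l → l < 0 :=
  stmt_6_general M G D hMnn hGnn hMne hDdiag hirr βstar hβstar hcrit
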